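/- arXiv:1103.0092 — 4 statements merged into one kernel-verified Lean document; each statement's English description precedes it below -/
import Mathlib

section
/- Let G be a compact second countable Hausdorff topological group with normalized Haar probability measure λ̄, acting measurably on a measurable space (E, ℰ). Let X be a random element of E and let S be a random element of G that is uniformly distributed on G (its law is λ̄) and independent of X. Then the law of S⁻¹·X equals the law of X if and only if X is stationary, i.e. the law of t·X equals the law of X for every t ∈ G. -/
/-!
Write `μ` for the law of `X`. By independence, the law of `S⁻¹ • X` is the average
`∫ t⁻¹ • μ dλ̄(t)` of the translates of `μ`. Every translate of this average is the average
itself, because the Haar probability measure of a compact group is also right invariant; so if the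
average equals `μ`, then `μ` is stationary. Conversely, if `μ` is stationary, all the averaged
translates are `μ`.
-/

open MeasureTheory Measure ProbabilityTheory

theorem MeasureTheory.Measure.isMulRightInvariant_of_isHaarMeasure_of_isProbabilityMeasure
    {G : Type*} [Group G] [TopologicalSpace G] [IsTopologicalGroup G] [LocallyCompactSpace G]
    [MeasurableSpace G] [BorelSpace G] (μ : Measure G) [μ.IsHaarMeasure]
    [IsProbabilityMeasure μ] : μ.IsMulRightInvariant where
  map_mul_right_eq_self g := by
    -- a right translate of `μ` is again a Haar probability measure, and those are unique
    have : IsProbabilityMeasure (μ.map (· * g)) :=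
      isProbabilityMeasure_map (measurable_mul_const g).aemeasurable
    exact isHaarMeasure_eq_of_isProbabilityMeasure _ _

section InvSMulAverage

variable {G E : Type*} [Group G] [MeasurableSpace G] [MulAction G E] [MeasurableSpace E]

/-- The law of `S⁻¹ • X` when `S ∼ lam` and `X ∼ ν` are independent. -/
noncomputable def invSMulAverage (lam : Measure G) (ν : Measure E) : Measure E :=
  (lam.prod ν).map fun p => p.1⁻¹ • p.2

variable [MeasurableInv G] [MeasurableSMul₂ G E]

lemma measurable_inv_smul : Measurable fun p : G × E => p.1⁻¹ • p.2 :=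
  measurable_fst.inv.smul measurable_snd

lemma invSMulAverage_apply (lam : Measure G) (ν : Measure E) [SFinite ν] {A : Set E}
    (hA : MeasurableSet A) :
    invSMulAverage lam ν A = ∫⁻ t, ν.map (t⁻¹ • ·) A ∂lam := by
  rw [invSMulAverage, map_apply measurable_inv_smul hA, prod_apply (measurable_inv_smul hA)]
  simp_rw [map_apply (measurable_const_smul _) hA]
  rfl

lemma map_smul_invSMulAverage [MeasurableMul G] (lam : Measure G) [lam.IsMulRightInvariant]
    [SFinite lam] (ν : Measure E) [SFinite ν] (t : G) :
    (invSMulAverage lam ν).map (t • ·) = invSMulAverage lam ν := by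
  have hshift : (fun p : G × E => t • p.1⁻¹ • p.2)
      = (fun p : G × E => p.1⁻¹ • p.2) ∘ Prod.map (· * t⁻¹) id := by
    ext p
    simp [mul_smul]
  rw [invSMulAverage, map_map (measurable_const_smul t) measurable_inv_smul]
  conv_rhs => rw [← map_mul_right_eq_self lam t⁻¹, ← map_id (μ := ν),
    map_prod_map _ _ (measurable_mul_const _) measurable_id,
    map_map measurable_inv_smul ((measurable_mul_const _).prodMap measurable_id)]
  exact congrArg (map · _) hshift

lemma invSMulAverage_eq_self_iff [MeasurableMul G] (lam : Measure G) [IsProbabilityMeasure lam]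
    [lam.IsMulRightInvariant] (ν : Measure E) [SFinite ν] :
    invSMulAverage lam ν = ν ↔ ∀ t : G, ν.map (t • ·) = ν := by
  refine ⟨fun h t => h ▸ map_smul_invSMulAverage lam ν t, fun h => ?_⟩
  ext A hA
  simp [invSMulAverage_apply lam ν hA, h]

theorem ProbabilityTheory.IndepFun.map_inv_smul_eq_invSMulAverage {Ω : Type*} [MeasurableSpace Ω]
    {P : Measure Ω} [IsFiniteMeasure P] {X : Ω → E} {S : Ω → G} (hX : Measurable X)
    (hS : Measurable S) (hindep : IndepFun S X P) :
    P.map (fun ω => (S ω)⁻¹ • X ω) = invSMulAverage (P.map S) (P.map X) := by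
  rw [invSMulAverage, ← (indepFun_iff_map_prod_eq_prod_map_map hS.aemeasurable
    hX.aemeasurable).1 hindep, map_map measurable_inv_smul (hS.prodMk hX)]
  rfl

end InvSMulAverage

theorem stmt1_general
    {G : Type*} [Group G] [TopologicalSpace G] [IsTopologicalGroup G] [CompactSpace G]
    [MeasurableSpace G] [BorelSpace G]
    (lam : Measure G) [lam.IsHaarMeasure] [IsProbabilityMeasure lam]
    {E : Type*} [MeasurableSpace E] [MulAction G E]
    (hact : Measurable fun p : G × E => p.1 • p.2)
    {Ω : Type*} [MeasurableSpace Ω] (P : Measure Ω) [IsProbabilityMeasure P]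
    (X : Ω → E) (S : Ω → G) (hX : Measurable X) (hS : Measurable S)
    (hlaw : Measure.map S P = lam)
    (hindep : ProbabilityTheory.IndepFun S X P) :
    Measure.map (fun ω => (S ω)⁻¹ • X ω) P = Measure.map X P
      ↔ ∀ t : G, Measure.map (fun ω => t • X ω) P = Measure.map X P := by
  have : MeasurableSMul₂ G E := ⟨hact⟩
  have := lam.isMulRightInvariant_of_isHaarMeasure_of_isProbabilityMeasure
  have hmap_smul (t : G) : P.map (fun ω => t • X ω) = (P.map X).map (t • ·) :=
    (map_map (measurable_const_smul t) hX).symm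
  rw [hindep.map_inv_smul_eq_invSMulAverage hX hS, hlaw, invSMulAverage_eq_self_iff]
  simp_rw [hmap_smul]

/-- Let `G` be a compact second countable Hausdorff topological group with
normalized Haar probability measure `lam`, acting measurably on a measurable space `E`.
If `X` is a random element of `E` and `S` is uniformly distributed on `G` and independent
of `X`, then `S⁻¹ • X` has the same law as `X` if and only if `X` is stationary. -/
theorem stmt1
    {G : Type*} [Group G] [TopologicalSpace G] [IsTopologicalGroup G] [CompactSpace G]
    [SecondCountableTopology G] [T2Space G] [MeasurableSpace G] [BorelSpace G]
    (lam : Measure G) [lam.IsHaarMeasure] [IsProbabilityMeasure lam]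
    {E : Type*} [MeasurableSpace E] [MulAction G E]
    (hact : Measurable fun p : G × E => p.1 • p.2)
    {Ω : Type*} [MeasurableSpace Ω] (P : Measure Ω) [IsProbabilityMeasure P]
    (X : Ω → E) (S : Ω → G) (hX : Measurable X) (hS : Measurable S)
    (hlaw : Measure.map S P = lam)
    (hindep : ProbabilityTheory.IndepFun S X P) :
    Measure.map (fun ω => (S ω)⁻¹ • X ω) P = Measure.map X P
      ↔ ∀ t : G, Measure.map (fun ω => t • X ω) P = Measure.map X P :=
  stmt1_general lam hact P X S hX hS hlaw hindep
end

section
/- Let G be a compact second countable Hausdorff topological group with Haar measure λ, acting measurably on (E, ℰ), and let X be a random element of E and ξ a random measure on G with 0 < ξ(G) < ∞ almost surely. Suppose the origin is a typical location for X in the mass of ξ, i.e. E[ξ(G)⁻¹ ∫ f(s⁻¹·(X,ξ)) ξ(ds)] = E[f(X,ξ)] for every measurable f : E × M(G) → [0,∞]. Let C ∈ 𝒢 satisfy λ(C) > 0 and assume that almost surely ξ(u⁻¹C) > 0 for λ-almost every u ∈ C. Then for every measurable g : (E × M(G)) × G → [0,∞]: E[ λ(C)⁻¹ ∫_C ξ(u⁻¹C)⁻¹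 ∫_{u⁻¹C} g(v⁻¹·(X,ξ), uv) ξ(dv) λ(du) ] = E[ λ(C)⁻¹ ∫_C g((X,ξ), u) λ(du) ]. (This identity states that (V_C⁻¹·(X,ξ), U_C V_C) has the same distribution as ((X,ξ), U_C), where U_C is uniform on C independent of (X,ξ) and V_C has conditional distribution ξ(·|U_C⁻¹C) given (X,ξ,U_C).) -/
open MeasureTheory
open scoped ENNReal

noncomputable section

/-- The shift `tμ` of a measure `μ` on a group `G`, with `(tμ)(A) = μ(t⁻¹A)`. -/
def smulM {G : Type*} [Group G] [MeasurableSpace G] (t : G) (μ : Measure G) : Measure G :=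
  Measure.map (fun s => t * s) μ

/-- The action `t·(x,μ) = (t·x, tμ)` on pairs of a point of `E` and a measure on `G`. -/
def mact {G : Type*} [Group G] [MeasurableSpace G] {E : Type*} [MulAction G E]
    (t : G) (p : E × Measure G) : E × Measure G :=
  (t • p.1, smulM t p.2)

/-! Let `F p = ∫_C condMean C g p u λ(du)` and `H p = ∫_C g(p, u) λ(du)`, so that the claim reads
`E[λ(C)⁻¹ F(X,ξ)] = E[λ(C)⁻¹ H(X,ξ)]`. Applying the typical-location identity to both sides, it
suffices to show `∫ F(s⁻¹·p) μ(ds) = ∫ H(s⁻¹·p) μ(ds)` for every `p = (x, μ)` with `μ` finite.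
Shifting `p` by `s⁻¹` shifts `condMean` on the right by `s⁻¹`, so the substitution `t = u s⁻¹`
(a Haar measure on a compact group is right invariant) and Tonelli turn the left side into
`∫ condMean C g p t · μ(t⁻¹C) λ(dt)`. There the normalisation of `condMean` cancels, and the same
substitution run backwards gives the right side.

To apply the identity, `F` has to be measurable on all of `E × M(G)`; this is arranged by replacing
an infinite `μ` by `0`, which does not matter since `ξ` is a.s. finite. -/

open ProbabilityTheory

namespace ProbabilityTheory.Kernel

variable {α β : Type*} [MeasurableSpace α] [MeasurableSpace β]

-- `κ` is the sum of its restrictions to the sets `{a | ⌊κ a univ⌋ = k}`, bounded by `k + 1`.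
theorem isSFiniteKernel_of_isFiniteMeasure (κ : Kernel α β) [∀ a, IsFiniteMeasure (κ a)] :
    IsSFiniteKernel κ := by
  classical
  set n : α → ℕ := fun a => ⌊(κ a Set.univ).toNNReal⌋₊
  have hn : Measurable n := (κ.measurable_coe MeasurableSet.univ).ennreal_toNNReal.nat_floor
  refine ⟨⟨fun k => piecewise (hn (measurableSet_singleton k)) κ 0, fun k => ⟨⟨k + 1,
    ENNReal.add_lt_top.2 ⟨ENNReal.natCast_lt_top k, ENNReal.one_lt_top⟩, fun a => ?_⟩⟩, ?_⟩⟩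
  · rw [piecewise_apply]
    split_ifs with h
    · rw [← ENNReal.coe_toNNReal (measure_ne_top (κ a) _), ← Set.mem_singleton_iff.1 h]
      exact_mod_cast (Nat.lt_floor_add_one _).le
    · simp
  · ext a s hs
    rw [sum_apply, Measure.sum_apply _ hs]
    simp only [piecewise_apply, Set.mem_preimage, Set.mem_singleton_iff, eq_comm (a := n a),
      apply_ite (fun μ : Measure β => μ s)]
    exact (tsum_ite_eq (n a) (fun _ => κ a s)).symm

/-- Unlike the identity of `Measure α`, this kernel is s-finite, so integrals against it depend
measurably on parameters. -/
def finiteOrZero (α : Type*) [MeasurableSpace α] : Kernel (Measure α) α where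
  toFun μ := if μ Set.univ < ∞ then μ else 0
  measurable' := Measurable.ite (Measure.measurable_coe MeasurableSet.univ measurableSet_Iio)
    measurable_id measurable_const

theorem finiteOrZero_apply_of_ne_top {μ : Measure α} (hμ : μ Set.univ ≠ ∞) :
    finiteOrZero α μ = μ :=
  if_pos hμ.lt_top

instance isFiniteMeasure_finiteOrZero (μ : Measure α) : IsFiniteMeasure (finiteOrZero α μ) := by
  by_cases hμ : μ Set.univ < ∞
  · rw [finiteOrZero_apply_of_ne_top hμ.ne]
    exact ⟨hμ⟩
  · rw [finiteOrZero, coe_mk, if_neg hμ]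
    infer_instance

instance : IsSFiniteKernel (finiteOrZero α) := isSFiniteKernel_of_isFiniteMeasure _

end ProbabilityTheory.Kernel

section Shift

variable {G : Type*} [Group G] [MeasurableSpace G] {E : Type*} [MulAction G E]

theorem smulM_eq_map_mulLeft [MeasurableMul G] (t : G) (μ : Measure G) :
    smulM t μ = Measure.map (MeasurableEquiv.mulLeft t) μ := by
  rw [MeasurableEquiv.coe_mulLeft]; rfl

theorem smulM_apply [MeasurableMul G] (t : G) (μ : Measure G) {A : Set G} (hA : MeasurableSet A) :
    smulM t μ A = μ ((t * ·) ⁻¹' A) :=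
  Measure.map_apply (measurable_const_mul t) hA

theorem smulM_univ [MeasurableMul G] (t : G) (μ : Measure G) :
    smulM t μ Set.univ = μ Set.univ := by
  rw [smulM_apply t μ MeasurableSet.univ, Set.preimage_univ]

theorem smulM_smulM [MeasurableMul G] (a b : G) (μ : Measure G) :
    smulM a (smulM b μ) = smulM (a * b) μ := by
  simp only [smulM, Measure.map_map (measurable_const_mul a) (measurable_const_mul b),
    Function.comp_def, mul_assoc]

theorem mact_mact [MeasurableMul G] (a b : G) (p : E × Measure G) :
    mact a (mact b p) = mact (a * b) p := by
  simp only [mact, smul_smul, smulM_smulM]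

variable {α : Type*} [MeasurableSpace α]

theorem measurable_smulM_kernel [MeasurableMul₂ G] (κ : Kernel α G) [IsSFiniteKernel κ] :
    Measurable fun q : α × G => smulM q.2 (κ q.1) := by
  refine Measure.measurable_of_measurable_coe _ fun A hA => ?_
  simp_rw [smulM_apply _ _ hA]
  exact Kernel.measurable_kernel_prodMk_left (κ := κ.comap Prod.fst measurable_fst)
    ((measurable_snd.comp measurable_fst).mul measurable_snd hA)

theorem measurable_mact_kernel [MeasurableMul₂ G] [MeasurableSpace E]
    (hact : Measurable fun p : G × E => p.1 • p.2) (κ : Kernel α G) [IsSFiniteKernel κ]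
    {x : α → E} (hx : Measurable x) :
    Measurable fun q : α × G => mact q.2 (x q.1, κ q.1) :=
  (hact.comp (measurable_snd.prodMk (hx.comp measurable_fst))).prodMk (measurable_smulM_kernel κ)

theorem measurable_mact_inv [MeasurableMul₂ G] [MeasurableInv G] [MeasurableSpace E]
    (hact : Measurable fun p : G × E => p.1 • p.2) (x : E) (μ : Measure G) [SFinite μ] :
    Measurable fun s : G => mact s⁻¹ (x, μ) :=
  (measurable_mact_kernel hact (Kernel.const G μ) measurable_const).comp
    (measurable_id.prodMk measurable_inv)

end Shift

section CondMean

variable {G : Type*} [Group G] [MeasurableSpace G] {E : Type*} [MulAction G E]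
  (C : Set G) (g : (E × Measure G) × G → ℝ≥0∞)

/-- The mean of `g (V⁻¹·p, u V)` for `V` distributed as `p.2` conditioned on `u⁻¹C`. -/
def condMean (p : E × Measure G) (u : G) : ℝ≥0∞ :=
  (p.2 ((u * ·) ⁻¹' C))⁻¹ * ∫⁻ v in (u * ·) ⁻¹' C, g (mact v⁻¹ p, u * v) ∂p.2

theorem condMean_mact [MeasurableMul G] (s u : G) (p : E × Measure G) :
    condMean C g (mact s p) u = condMean C g p (u * s) := by
  have hpre : (s * ·) ⁻¹' ((u * ·) ⁻¹' C) = (u * s * ·) ⁻¹' C := by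
    ext w; simp [mul_assoc]
  have hmact (w : G) : mact (s * w)⁻¹ (mact s p) = mact w⁻¹ p := by
    rw [mact_mact, mul_inv_rev, inv_mul_cancel_right]
  change (smulM s p.2 _)⁻¹ * ∫⁻ v in _, g (mact v⁻¹ (mact s p), u * v) ∂(smulM s p.2) = _
  rw [smulM_eq_map_mulLeft, MeasurableEquiv.restrict_map, lintegral_map_equiv,
    MeasurableEquiv.map_apply, MeasurableEquiv.coe_mulLeft, hpre]
  simp only [hmact, mul_assoc, condMean]

theorem condMean_mul_measure {p : E × Measure G} {u : G} (hu : p.2 ((u * ·) ⁻¹' C) ≠ ∞) :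
    condMean C g p u * p.2 ((u * ·) ⁻¹' C)
      = ∫⁻ v in (u * ·) ⁻¹' C, g (mact v⁻¹ p, u * v) ∂p.2 := by
  by_cases h0 : p.2 ((u * ·) ⁻¹' C) = 0
  · rw [h0, mul_zero, setLIntegral_measure_zero _ _ h0]
  · rw [condMean, mul_comm, ← mul_assoc, ENNReal.mul_inv_cancel h0 hu, one_mul]

def condMeanIntegral (lam : Measure G) (p : E × Measure G) : ℝ≥0∞ :=
  ∫⁻ u in C, condMean C g (p.1, Kernel.finiteOrZero G p.2) u ∂lam

theorem condMeanIntegral_of_ne_top (lam : Measure G) {p : E × Measure G}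
    (hp : p.2 Set.univ ≠ ∞) : condMeanIntegral C g lam p = ∫⁻ u in C, condMean C g p u ∂lam := by
  rw [condMeanIntegral, Kernel.finiteOrZero_apply_of_ne_top hp]

variable {C g} {α : Type*} [MeasurableSpace α] [MeasurableMul₂ G] [MeasurableInv G]
  [MeasurableSpace E]

theorem measurable_condMean (hact : Measurable fun p : G × E => p.1 • p.2)
    (hC : MeasurableSet C) (hg : Measurable g) (κ : Kernel α G) [IsSFiniteKernel κ]
    {x : α → E} (hx : Measurable x) {u : α → G} (hu : Measurable u) :
    Measurable fun a => condMean C g (x a, κ a) (u a) := by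
  have hS : MeasurableSet {q : α × G | u q.1 * q.2 ∈ C} :=
    (hu.comp measurable_fst).mul measurable_snd hC
  have hint : Measurable fun q : α × G => g (mact q.2⁻¹ (x q.1, κ q.1), u q.1 * q.2) :=
    hg.comp (((measurable_mact_kernel hact κ hx).comp
      (measurable_fst.prodMk measurable_snd.inv)).prodMk
      ((hu.comp measurable_fst).mul measurable_snd))
  refine (Kernel.measurable_kernel_prodMk_left hS).inv.mul ?_
  simp_rw [← lintegral_indicator (measurable_const_mul _ hC)]
  exact (hint.indicator hS).lintegral_kernel_prod_right'

theorem measurable_condMeanIntegral (hact : Measurable fun p : G × E => p.1 • p.2)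
    (lam : Measure G) [SFinite lam] (hC : MeasurableSet C) (hg : Measurable g) :
    Measurable (condMeanIntegral C g lam) := by
  have h := measurable_condMean hact hC hg ((Kernel.finiteOrZero G).comap (·.1.2) (by fun_prop))
    (x := fun q : (E × Measure G) × G => q.1.1) (by fun_prop) (u := Prod.snd) measurable_snd
  simp only [Kernel.comap_apply] at h
  exact h.lintegral_prod_right'

end CondMean

section Transport

variable {G : Type*} [Group G] [MeasurableSpace G] [MeasurableMul₂ G]
  {lam μ : Measure G} [SFinite lam] [SFinite μ] {C : Set G}

theorem lintegral_setLIntegral_eq_lintegral_setLIntegral_preimage_mul [lam.IsMulRightInvariant]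
    (hC : MeasurableSet C) {φ : G → G → ℝ≥0∞} (hφ : Measurable (Function.uncurry φ)) :
    ∫⁻ w, ∫⁻ r in C, φ w r ∂lam ∂μ = ∫⁻ t, ∫⁻ w in (t * ·) ⁻¹' C, φ w (t * w) ∂μ ∂lam := by
  have hmeas : Measurable fun q : G × G => C.indicator (φ q.1) (q.2 * q.1) :=
    (hφ.comp (measurable_fst.prodMk (measurable_snd.mul measurable_fst))).indicator
      (measurable_snd.mul measurable_fst hC)
  calc ∫⁻ w, ∫⁻ r in C, φ w r ∂lam ∂μ
      = ∫⁻ w, ∫⁻ t, C.indicator (φ w) (t * w) ∂lam ∂μ := by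
        simp_rw [← lintegral_indicator hC, lintegral_mul_right_eq_self]
    _ = ∫⁻ t, ∫⁻ w, C.indicator (φ w) (t * w) ∂μ ∂lam :=
        lintegral_lintegral_swap hmeas.aemeasurable
    _ = ∫⁻ t, ∫⁻ w in (t * ·) ⁻¹' C, φ w (t * w) ∂μ ∂lam := by
        simp_rw [← lintegral_indicator (measurable_const_mul _ hC)]
        rfl

end Transport

theorem lintegral_condMeanIntegral_mact {G : Type*} [Group G] [MeasurableSpace G]
    [MeasurableMul₂ G] [MeasurableInv G] {E : Type*} [MeasurableSpace E] [MulAction G E]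
    (hact : Measurable fun p : G × E => p.1 • p.2) (lam : Measure G) [SFinite lam]
    [lam.IsMulRightInvariant] {C : Set G} (hC : MeasurableSet C)
    {g : (E × Measure G) × G → ℝ≥0∞} (hg : Measurable g) (x : E) (μ : Measure G)
    [IsFiniteMeasure μ] :
    ∫⁻ s, condMeanIntegral C g lam (mact s⁻¹ (x, μ)) ∂μ
      = ∫⁻ s, ∫⁻ u in C, g (mact s⁻¹ (x, μ), u) ∂lam ∂μ := by
  have hK : Measurable (Function.uncurry fun s u => condMean C g (x, μ) (u * s⁻¹)) :=
    measurable_condMean hact hC hg (Kernel.const (G × G) μ) measurable_const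
      (measurable_snd.mul measurable_fst.inv)
  have hg' : Measurable (Function.uncurry fun s u => g (mact s⁻¹ (x, μ), u)) :=
    hg.comp (((measurable_mact_inv hact x μ).comp measurable_fst).prodMk measurable_snd)
  have hfin (s : G) : (mact s⁻¹ (x, μ)).2 Set.univ ≠ ∞ :=
    (smulM_univ _ _).trans_ne (measure_ne_top μ _)
  calc ∫⁻ s, condMeanIntegral C g lam (mact s⁻¹ (x, μ)) ∂μ
      = ∫⁻ s, ∫⁻ u in C, condMean C g (x, μ) (u * s⁻¹) ∂lam ∂μ := by
        simp_rw [condMeanIntegral_of_ne_top C g lam (hfin _), condMean_mact]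
    _ = ∫⁻ t, ∫⁻ w in (t * ·) ⁻¹' C, condMean C g (x, μ) (t * w * w⁻¹) ∂μ ∂lam :=
        lintegral_setLIntegral_eq_lintegral_setLIntegral_preimage_mul hC hK
    _ = ∫⁻ t, condMean C g (x, μ) t * μ ((t * ·) ⁻¹' C) ∂lam := by
        simp_rw [mul_inv_cancel_right, setLIntegral_const]
    _ = ∫⁻ t, ∫⁻ w in (t * ·) ⁻¹' C, g (mact w⁻¹ (x, μ), t * w) ∂μ ∂lam := by
        simp_rw [condMean_mul_measure C g (p := (x, μ)) (measure_ne_top μ _)]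
    _ = ∫⁻ s, ∫⁻ u in C, g (mact s⁻¹ (x, μ), u) ∂lam ∂μ :=
        (lintegral_setLIntegral_eq_lintegral_setLIntegral_preimage_mul hC hg').symm

theorem MeasureTheory.Measure.isMulRightInvariant_of_compactSpace {G : Type*} [Group G]
    [TopologicalSpace G] [IsTopologicalGroup G] [CompactSpace G] [MeasurableSpace G] [BorelSpace G]
    (lam : Measure G) [lam.IsHaarMeasure] : lam.IsMulRightInvariant := by
  refine ⟨fun s => ?_⟩
  have : IsFiniteMeasure lam := CompactSpace.isFiniteMeasure
  have hmap := Measure.isMulInvariant_eq_smul_of_compactSpace (Measure.map (· * s) lam) lam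
  have huniv : Measure.map (· * s) lam Set.univ = lam Set.univ := by
    rw [Measure.map_apply (measurable_mul_const s) MeasurableSet.univ, Set.preimage_univ]
  have hc : Measure.haarScalarFactor (Measure.map (· * s) lam) lam = 1 := by
    rw [hmap, Measure.smul_apply, ENNReal.smul_def, smul_eq_mul] at huniv
    exact_mod_cast (ENNReal.mul_eq_right (NeZero.ne _) (measure_ne_top lam _)).1 huniv
  rw [hmap, hc, one_smul]

theorem stmt2_general
    {G : Type*} [Group G] [TopologicalSpace G] [IsTopologicalGroup G] [CompactSpace G]
    [SecondCountableTopology G] [MeasurableSpace G] [BorelSpace G]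
    (lam : Measure G) [lam.IsHaarMeasure]
    {E : Type*} [MeasurableSpace E] [MulAction G E]
    (hact : Measurable fun p : G × E => p.1 • p.2)
    {Ω : Type*} [MeasurableSpace Ω] (P : Measure Ω)
    (X : Ω → E) (ξ : Ω → Measure G)
    (hpos : ∀ᵐ ω ∂P, 0 < ξ ω Set.univ ∧ ξ ω Set.univ < ⊤)
    -- the origin is a typical location for `X` in the mass of `ξ`
    (htyp : ∀ f : E × Measure G → ℝ≥0∞, Measurable f →
      ∫⁻ ω, (ξ ω Set.univ)⁻¹ * ∫⁻ s, f (mact s⁻¹ (X ω, ξ ω)) ∂(ξ ω) ∂P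
        = ∫⁻ ω, f (X ω, ξ ω) ∂P)
    (C : Set G) (hC : MeasurableSet C) :
    ∀ g : (E × Measure G) × G → ℝ≥0∞, Measurable g →
      ∫⁻ ω, (lam C)⁻¹ *
          ∫⁻ u in C, (ξ ω ((fun w => u * w) ⁻¹' C))⁻¹ *
            ∫⁻ v in (fun w => u * w) ⁻¹' C, g (mact v⁻¹ (X ω, ξ ω), u * v) ∂(ξ ω) ∂lam ∂P
        = ∫⁻ ω, (lam C)⁻¹ * ∫⁻ u in C, g ((X ω, ξ ω), u) ∂lam ∂P := by
  intro g hg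
  have : IsFiniteMeasure lam := CompactSpace.isFiniteMeasure
  have : lam.IsMulRightInvariant := Measure.isMulRightInvariant_of_compactSpace lam
  have hF := measurable_condMeanIntegral hact lam hC hg
  have hH : Measurable fun p => ∫⁻ u in C, g (p, u) ∂lam := hg.lintegral_prod_right'
  have htransport : ∀ᵐ ω ∂P,
      ∫⁻ s, (lam C)⁻¹ * condMeanIntegral C g lam (mact s⁻¹ (X ω, ξ ω)) ∂ξ ω
        = ∫⁻ s, (lam C)⁻¹ * ∫⁻ u in C, g (mact s⁻¹ (X ω, ξ ω), u) ∂lam ∂ξ ω := by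
    filter_upwards [hpos] with ω hω
    have : IsFiniteMeasure (ξ ω) := ⟨hω.2⟩
    have hmact := measurable_mact_inv hact (X ω) (ξ ω)
    rw [lintegral_const_mul, lintegral_const_mul, lintegral_condMeanIntegral_mact hact lam hC hg]
    exacts [hH.comp hmact, hF.comp hmact]
  calc _ = ∫⁻ ω, (lam C)⁻¹ * condMeanIntegral C g lam (X ω, ξ ω) ∂P :=
        lintegral_congr_ae (hpos.mono fun ω hω => by
          dsimp only; rw [condMeanIntegral_of_ne_top C g lam hω.2.ne]; rfl)
    _ = ∫⁻ ω, (ξ ω Set.univ)⁻¹ *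
          ∫⁻ s, (lam C)⁻¹ * condMeanIntegral C g lam (mact s⁻¹ (X ω, ξ ω)) ∂ξ ω ∂P :=
        (htyp _ (hF.const_mul _)).symm
    _ = ∫⁻ ω, (ξ ω Set.univ)⁻¹ *
          ∫⁻ s, (lam C)⁻¹ * ∫⁻ u in C, g (mact s⁻¹ (X ω, ξ ω), u) ∂lam ∂ξ ω ∂P :=
        lintegral_congr_ae (htransport.mono fun ω h => congrArg ((ξ ω Set.univ)⁻¹ * ·) h)
    _ = _ := htyp _ (hH.const_mul _)

/-- (`G` compact.)  If the origin is a typical location for `X` in the mass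
of `ξ`, then for any `C ∈ 𝒢` with `λ(C) > 0` such that a.s. `ξ(u⁻¹C) > 0` for λ-a.e. `u ∈ C`,
the pair `(V_C⁻¹·(X,ξ), U_C V_C)` has the same distribution as `((X,ξ), U_C)`, expressed by
the transport identity below (property (2.1) of the paper). -/
theorem stmt2
    {G : Type*} [Group G] [TopologicalSpace G] [IsTopologicalGroup G] [CompactSpace G]
    [SecondCountableTopology G] [T2Space G] [MeasurableSpace G] [BorelSpace G]
    (lam : Measure G) [lam.IsHaarMeasure]
    {E : Type*} [MeasurableSpace E] [MulAction G E]
    (hact : Measurable fun p : G × E => p.1 • p.2)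
    {Ω : Type*} [MeasurableSpace Ω] (P : Measure Ω) [IsProbabilityMeasure P]
    (X : Ω → E) (ξ : Ω → Measure G) (hX : Measurable X) (hξ : Measurable ξ)
    (hpos : ∀ᵐ ω ∂P, 0 < ξ ω Set.univ ∧ ξ ω Set.univ < ⊤)
    -- the origin is a typical location for `X` in the mass of `ξ`
    (htyp : ∀ f : E × Measure G → ℝ≥0∞, Measurable f →
      ∫⁻ ω, (ξ ω Set.univ)⁻¹ * ∫⁻ s, f (mact s⁻¹ (X ω, ξ ω)) ∂(ξ ω) ∂P
        = ∫⁻ ω, f (X ω, ξ ω) ∂P)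
    (C : Set G) (hC : MeasurableSet C) (hCpos : 0 < lam C)
    (hCξ : ∀ᵐ ω ∂P, ∀ᵐ u ∂(lam.restrict C), 0 < ξ ω ((fun w => u * w) ⁻¹' C)) :
    ∀ g : (E × Measure G) × G → ℝ≥0∞, Measurable g →
      ∫⁻ ω, (lam C)⁻¹ *
          ∫⁻ u in C, (ξ ω ((fun w => u * w) ⁻¹' C))⁻¹ *
            ∫⁻ v in (fun w => u * w) ⁻¹' C, g (mact v⁻¹ (X ω, ξ ω), u * v) ∂(ξ ω) ∂lam ∂P
        = ∫⁻ ω, (lam C)⁻¹ * ∫⁻ u in C, g ((X ω, ξ ω), u) ∂lam ∂P :=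
  stmt2_general lam hact P X ξ hpos htyp C hC
end
end

section
/- Let G be a compact second countable Hausdorff topological group with Haar measure λ, acting measurably on (E, ℰ), and let X be a random element of E and ξ a random measure on G with 0 < ξ(G) < ∞ almost surely. Suppose that for every measurable g : (E × M(G)) × G → [0,∞]: E[ λ(G)⁻¹ ∫_G ξ(G)⁻¹ ∫_G g(v⁻¹·(X,ξ), uv) ξ(dv) λ(du) ] = E[ λ(G)⁻¹ ∫_G g((X,ξ), u) λ(du) ] (this is property (2.1) of the paper for the set C = G). Then the origin is a typical location for X in the mass of ξ, i.e. E[ξ(G)⁻¹ ∫ f(s⁻¹·(X,ξ)) ξ(ds)] = E[f(X,ξ)] for every measurable f : E × M(G) → [0,∞]. -/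
open MeasureTheory
open scoped ENNReal

noncomputable section

theorem inv_measure_univ_mul_lintegral_const {α : Type*} [MeasurableSpace α] (μ : Measure α)
    [IsFiniteMeasure μ] [NeZero μ] (c : ℝ≥0∞) :
    (μ Set.univ)⁻¹ * ∫⁻ _, c ∂μ = c := by
  rw [lintegral_const, mul_comm c]
  exact ENNReal.inv_mul_cancel_left (NeZero.ne (μ Set.univ)) (measure_ne_top μ _)

theorem stmt3_general
    {G : Type*} [Group G] [TopologicalSpace G] [CompactSpace G]
    [MeasurableSpace G]
    (lam : Measure G) [lam.IsHaarMeasure]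
    {E : Type*} [MeasurableSpace E] [MulAction G E]
    {Ω : Type*} [MeasurableSpace Ω] (P : Measure Ω)
    (X : Ω → E) (ξ : Ω → Measure G)
    -- property (2.1) of the paper for `C = G`
    (h21 : ∀ g : (E × Measure G) × G → ℝ≥0∞, Measurable g →
      ∫⁻ ω, (lam Set.univ)⁻¹ *
          ∫⁻ u, (ξ ω Set.univ)⁻¹ * ∫⁻ v, g (mact v⁻¹ (X ω, ξ ω), u * v) ∂(ξ ω) ∂lam ∂P
        = ∫⁻ ω, (lam Set.univ)⁻¹ * ∫⁻ u, g ((X ω, ξ ω), u) ∂lam ∂P) :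
    ∀ f : E × Measure G → ℝ≥0∞, Measurable f →
      ∫⁻ ω, (ξ ω Set.univ)⁻¹ * ∫⁻ s, f (mact s⁻¹ (X ω, ξ ω)) ∂(ξ ω) ∂P
        = ∫⁻ ω, f (X ω, ξ ω) ∂P := by
  intro f hf
  -- `g` ignoring its `G`-coordinate: the outer `λ`-average in (2.1) then drops out on both sides
  simpa only [inv_measure_univ_mul_lintegral_const] using
    h21 (fun p => f p.1) (hf.comp measurable_fst)

/-- (`G` compact.)  If property (2.1) of the paper holds for the set `C = G`,
then the origin is a typical location for `X` in the mass of `ξ`. -/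
theorem stmt3
    {G : Type*} [Group G] [TopologicalSpace G] [IsTopologicalGroup G] [CompactSpace G]
    [SecondCountableTopology G] [T2Space G] [MeasurableSpace G] [BorelSpace G]
    (lam : Measure G) [lam.IsHaarMeasure]
    {E : Type*} [MeasurableSpace E] [MulAction G E]
    (hact : Measurable fun p : G × E => p.1 • p.2)
    {Ω : Type*} [MeasurableSpace Ω] (P : Measure Ω) [IsProbabilityMeasure P]
    (X : Ω → E) (ξ : Ω → Measure G) (hX : Measurable X) (hξ : Measurable ξ)
    (hpos : ∀ᵐ ω ∂P, 0 < ξ ω Set.univ ∧ ξ ω Set.univ < ⊤)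
    -- property (2.1) of the paper for `C = G`
    (h21 : ∀ g : (E × Measure G) × G → ℝ≥0∞, Measurable g →
      ∫⁻ ω, (lam Set.univ)⁻¹ *
          ∫⁻ u, (ξ ω Set.univ)⁻¹ * ∫⁻ v, g (mact v⁻¹ (X ω, ξ ω), u * v) ∂(ξ ω) ∂lam ∂P
        = ∫⁻ ω, (lam Set.univ)⁻¹ * ∫⁻ u, g ((X ω, ξ ω), u) ∂lam ∂P) :
    ∀ f : E × Measure G → ℝ≥0∞, Measurable f →
      ∫⁻ ω, (ξ ω Set.univ)⁻¹ * ∫⁻ s, f (mact s⁻¹ (X ω, ξ ω)) ∂(ξ ω) ∂P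
        = ∫⁻ ω, f (X ω, ξ ω) ∂P :=
  stmt3_general lam P X ξ h21
end
end

section
/- Let d ≥ 1 and γ > 0, and let Π be the distribution of a stationary Poisson process on ℝ^d with intensity measure γ times Lebesgue measure: a probability measure on M(ℝ^d) concentrated on simple point measures such that for every finite family of pairwise disjoint bounded Borel sets A₁,…,Aₙ, the coordinates ν ↦ ν(A₁),…,ν(Aₙ) are independent Poisson random variables with means γ·Leb(A₁),…,γ·Leb(Aₙ). Then with positive probability the process has no point that is closer to the origin than to every other point of the process: Π({ν : there is no t ∈ supp ν such that |t| < |t − s| for all s ∈ supp ν with s ≠ t}) > 0. -/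
/-!
Call a configuration good if it has no point in the unit ball, no cell of a fixed finite partition
of the annulus `1 ≤ ‖x‖ < L` into pieces of diameter `< 1` carries exactly one point, and every
ball `farBall L (n, y)` (scale `2ⁿ L`, `y` in a finite net of the shell `3/2 ≤ ‖y‖ ≤ 3`) is
occupied. In a good configuration every point `t` has another point `s` with `‖t - s‖ < ‖t‖`: in
the annulus a second point of the cell of `t` will do, and for `‖t‖ ≥ L` some far ball lies inside
`ball ((3/2) • t) (‖t‖/2)`.

The far balls lie outside `ball 0 L`, so the Poisson property makes the event "some far ball is
empty" independent of the event on the annulus, whose probability is positive (all cells empty).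
By the union bound its conditional probability is at most `∑ exp (-γ Leb (farBall L (n, y)))`, a
doubly exponentially decaying series which is `< 1` once `L` is large.
-/

open MeasureTheory
open scoped ENNReal NNReal

noncomputable section

/-- The support of a measure: the set of points all of whose open neighbourhoods have
positive measure. -/
def msupp {V : Type*} [TopologicalSpace V] [MeasurableSpace V] (μ : Measure V) : Set V :=
  {t | ∀ U : Set V, IsOpen U → t ∈ U → 0 < μ U}

/-- A simple point measure: a locally finite integer-valued measure with all atoms of size
at most one. -/
def IsSimplePointMeasure {V : Type*} [TopologicalSpace V] [MeasurableSpace V]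
    (μ : Measure V) : Prop :=
  IsLocallyFiniteMeasure μ ∧ (∀ A : Set V, MeasurableSet A → μ A = ⊤ ∨ ∃ n : ℕ, μ A = n) ∧
    ∀ t : V, μ {t} ≤ 1

open Metric Set Filter Topology Function

section Support

variable {X : Type*} [TopologicalSpace X] [MeasurableSpace X]

theorem msupp_eq_support (μ : Measure X) : msupp μ = μ.support := by
  rw [Measure.support_eq_forall_isOpen]
  ext x
  exact forall_congr' fun U => forall_comm

variable [HereditarilyLindelofSpace X] {μ : Measure X}

theorem exists_mem_msupp_of_measure_ne_zero {s : Set X} (hs : μ s ≠ 0) :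
    ∃ x ∈ msupp μ, x ∈ s := by
  obtain ⟨x, hxs, hx⟩ := Measure.nonempty_inter_support_of_pos (pos_iff_ne_zero.2 hs)
  exact ⟨x, msupp_eq_support μ ▸ hx, hxs⟩

theorem measure_le_of_msupp_inter_subset {s : Set X} {x : X} (h : msupp μ ∩ s ⊆ {x}) :
    μ s ≤ μ {x} :=
  calc μ s ≤ μ (s ∩ μ.support) + μ (s \ μ.support) := measure_le_inter_add_sdiff μ _ _
    _ = μ (s ∩ μ.support) := by
      rw [measure_mono_null (sdiff_subset_compl _ _) Measure.measure_compl_support, add_zero]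
    _ ≤ μ {x} := measure_mono (by rw [← msupp_eq_support, inter_comm]; exact h)

end Support

section PointMeasure

variable {X : Type*} [MetricSpace X] [MeasurableSpace X] [OpensMeasurableSpace X]
  {μ : Measure X}

theorem one_le_measure_singleton_of_mem_msupp [IsLocallyFiniteMeasure μ]
    (hμ : ∀ s, MeasurableSet s → μ s = ⊤ ∨ ∃ n : ℕ, μ s = n) {x : X} (hx : x ∈ msupp μ) :
    1 ≤ μ {x} := by
  obtain ⟨u, hu, hμu⟩ := μ.finiteAt_nhds x
  obtain ⟨R, hR, hRu⟩ := Metric.mem_nhds_iff.1 hu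
  have hfin : ∃ r > 0, μ (cthickening r {x}) ≠ ⊤ := by
    refine ⟨R / 2, half_pos hR, ne_top_of_le_ne_top hμu.ne (measure_mono ?_)⟩
    rw [cthickening_singleton x (half_pos hR).le]
    exact (closedBall_subset_ball (half_lt_self hR)).trans hRu
  have hlim := (tendsto_measure_cthickening_of_isClosed hfin isClosed_singleton).mono_left
    (nhdsWithin_le_nhds (s := Ioi 0))
  refine ge_of_tendsto hlim (eventually_nhdsWithin_of_forall fun r (hr : 0 < r) => ?_)
  rw [cthickening_singleton x hr.le]
  have hpos : 0 < μ (closedBall x r) :=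
    (hx _ isOpen_ball (mem_ball_self hr)).trans_le (measure_mono ball_subset_closedBall)
  rcases hμ (closedBall x r) measurableSet_closedBall with htop | ⟨n, hn⟩
  · simp [htop]
  · rw [hn] at hpos ⊢
    exact_mod_cast Nat.one_le_iff_ne_zero.2 (by rintro rfl; simp at hpos)

theorem IsSimplePointMeasure.measure_singleton_eq_one (hμ : IsSimplePointMeasure μ) {x : X}
    (hx : x ∈ msupp μ) : μ {x} = 1 :=
  have := hμ.1
  le_antisymm (hμ.2.2 x) (one_le_measure_singleton_of_mem_msupp hμ.2.1 hx)

theorem IsSimplePointMeasure.exists_mem_msupp_ne [HereditarilyLindelofSpace X]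
    (hμ : IsSimplePointMeasure μ) {x : X} (hx : x ∈ msupp μ) {s : Set X} (hxs : x ∈ s)
    (hs : μ s ≠ 1) : ∃ y ∈ msupp μ, y ∈ s ∧ y ≠ x := by
  by_contra! h
  refine hs (le_antisymm ?_ ?_) <;> rw [← hμ.measure_singleton_eq_one hx]
  · exact measure_le_of_msupp_inter_subset fun y hy => h y hy.1 hy.2
  · exact measure_mono (singleton_subset_iff.2 hxs)

end PointMeasure

section Geometry

variable {E : Type*} [NormedAddCommGroup E] [NormedSpace ℝ E]

theorem ne_and_norm_sub_lt_of_mem_ball_smul {t s : E}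
    (hs : s ∈ ball ((3 / 2 : ℝ) • t) (‖t‖ / 2)) : s ≠ t ∧ ‖t - s‖ < ‖t‖ := by
  have hdist : dist t ((3 / 2 : ℝ) • t) = ‖t‖ / 2 := by
    rw [dist_eq_norm, show t - (3 / 2 : ℝ) • t = (-(1 / 2) : ℝ) • t by module, norm_smul]
    norm_num
    ring
  rw [mem_ball] at hs
  refine ⟨by rintro rfl; linarith, ?_⟩
  calc ‖t - s‖ = dist t s := (dist_eq_norm t s).symm
    _ ≤ dist t ((3 / 2 : ℝ) • t) + dist s ((3 / 2 : ℝ) • t) := dist_triangle_right _ _ _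
    _ < ‖t‖ := by linarith

def farBall (L : ℝ) (p : ℕ × E) : Set E := ball ((2 ^ p.1 * L) • p.2) (2 ^ p.1 * L / 4)

theorem lt_norm_of_mem_farBall {L : ℝ} (hL : 0 < L) {p : ℕ × E} (hp : 3 / 2 ≤ ‖p.2‖) {w : E}
    (hw : w ∈ farBall L p) : L < ‖w‖ := by
  rw [farBall, mem_ball, dist_eq_norm] at hw
  have hQ : L ≤ 2 ^ p.1 * L := le_mul_of_one_le_left hL.le (one_le_pow₀ one_le_two)
  have hQy : ‖(2 ^ p.1 * L) • p.2‖ = 2 ^ p.1 * L * ‖p.2‖ := by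
    rw [norm_smul, Real.norm_of_nonneg (by positivity)]
  have := norm_sub_norm_le ((2 ^ p.1 * L) • p.2) w
  rw [norm_sub_rev] at this
  nlinarith

theorem exists_farBall_subset_ball {L : ℝ} (hL : 0 < L) {Y : Set E}
    (hY : closedBall 0 3 \ ball 0 (3 / 2) ⊆ ⋃ y ∈ Y, ball y (1 / 4)) {t : E} (ht : L ≤ ‖t‖) :
    ∃ n : ℕ, ∃ y ∈ Y, farBall L (n, y) ⊆ ball ((3 / 2 : ℝ) • t) (‖t‖ / 2) := by
  obtain ⟨n, hn, hn'⟩ := exists_nat_pow_near ((one_le_div hL).2 ht) one_lt_two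
  set Q : ℝ := 2 ^ n * L
  have hQ : 0 < Q := by positivity
  have hQt : Q ≤ ‖t‖ := by rwa [le_div_iff₀ hL] at hn
  have htQ : ‖t‖ < 2 * Q := by rwa [div_lt_iff₀ hL, pow_succ, mul_comm _ (2 : ℝ), mul_assoc] at hn'
  have hz : Q⁻¹ • (3 / 2 : ℝ) • t ∈ closedBall (0 : E) 3 \ ball 0 (3 / 2) := by
    have : ‖Q⁻¹ • (3 / 2 : ℝ) • t‖ = 3 / 2 * ‖t‖ / Q := by
      rw [norm_smul, norm_smul, Real.norm_of_nonneg (by positivity),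
        Real.norm_of_nonneg (by positivity)]
      field_simp
    simp only [Set.mem_sdiff, mem_closedBall_zero_iff, mem_ball_zero_iff, not_lt, this]
    constructor
    · rw [div_le_iff₀ hQ]; linarith
    · rw [le_div_iff₀ hQ]; linarith
  obtain ⟨y, hy, hzy⟩ := mem_iUnion₂.1 (hY hz)
  refine ⟨n, y, hy, ball_subset_ball' ?_⟩
  have : dist (Q • y) ((3 / 2 : ℝ) • t) < Q / 4 := by
    rw [← smul_inv_smul₀ hQ.ne' ((3 / 2 : ℝ) • t), dist_smul₀, Real.norm_of_nonneg hQ.le,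
      dist_comm]
    rw [mem_ball] at hzy
    linarith [mul_lt_mul_of_pos_left hzy hQ]
  linarith

end Geometry

theorem exists_finset_shell_subset_iUnion_ball {E : Type*} [NormedAddCommGroup E]
    [ProperSpace E] :
    ∃ Y : Finset E, (∀ y ∈ Y, 3 / 2 ≤ ‖y‖) ∧
      closedBall 0 3 \ ball 0 (3 / 2) ⊆ ⋃ y ∈ (Y : Set E), ball y (1 / 4) := by
  obtain ⟨Y, hYK, hY⟩ := ((isCompact_closedBall (0 : E) 3).diff isOpen_ball).elim_nhds_subcover
    (fun y => ball y (1 / 4)) fun y _ => ball_mem_nhds y (by norm_num)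
  exact ⟨Y, fun y hy => not_lt.1 (mt mem_ball_zero_iff.2 (hYK y hy).2), by simpa using hY⟩

theorem TotallyBounded.exists_measurable_partition {X : Type*} [PseudoMetricSpace X]
    [MeasurableSpace X] [OpensMeasurableSpace X] {S : Set X} (hS : TotallyBounded S)
    (hSm : MeasurableSet S) {ε : ℝ} (hε : 0 < ε) :
    ∃ (m : ℕ) (c : Fin m → Set X), (∀ i, MeasurableSet (c i)) ∧ (∀ i, c i ⊆ S) ∧
      Pairwise (Disjoint on c) ∧ S ⊆ ⋃ i, c i ∧
      ∀ i, ∀ x ∈ c i, ∀ y ∈ c i, dist x y < ε := by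
  obtain ⟨t, ht, hSt⟩ := Metric.totallyBounded_iff.1 hS (ε / 2) (half_pos hε)
  obtain ⟨m, e, rfl⟩ := ht.fin_embedding
  set f : Fin m → Set X := fun i => S ∩ ball (e i) (ε / 2)
  refine ⟨m, disjointed f, fun i => ?_, fun i => (disjointed_subset f i).trans inter_subset_left,
    disjoint_disjointed f, fun x hx => ?_, fun i x hx y hy => ?_⟩
  · rw [disjointed_eq_inter_compl]
    exact (hSm.inter measurableSet_ball).inter
      (MeasurableSet.iInter fun j => MeasurableSet.iInter fun _ =>
        (hSm.inter measurableSet_ball).compl)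
  · rw [iUnion_disjointed]
    obtain ⟨_, ⟨i, rfl⟩, hxi⟩ := mem_iUnion₂.1 (hSt hx)
    exact mem_iUnion.2 ⟨i, hx, hxi⟩
  · have hx' := (disjointed_subset f i hx).2
    have hy' := (disjointed_subset f i hy).2
    rw [mem_ball] at hx' hy'
    linarith [dist_triangle_right x y (e i)]

theorem Fin.pairwise_cons {α : Type*} {r : α → α → Prop} [Std.Symm r] {n : ℕ} {a : α}
    {f : Fin n → α} (ha : ∀ i, r a (f i)) (hf : Pairwise (r on f)) :
    Pairwise (r on (Fin.cons a f : Fin (n + 1) → α)) := by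
  intro i j hij
  cases i using Fin.cases <;> cases j using Fin.cases
  · exact absurd rfl hij
  · exact ha _
  · exact Std.Symm.symm _ _ (ha _)
  · exact hf fun h => hij (congrArg Fin.succ h)

theorem measure_sdiff_iUnion_pos {Ω ι : Type*} [MeasurableSpace Ω] [Countable ι] {P : Measure Ω}
    [IsFiniteMeasure P] {E : Set Ω} (hE : 0 < P E) {Z : ι → Set Ω} {c : ι → ℝ≥0∞}
    (hZ : ∀ j, P (E ∩ Z j) = c j * P E) (hc : ∑' j, c j < 1) : 0 < P (E \ ⋃ j, Z j) := by
  by_contra! h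
  have : P E ≤ (∑' j, c j) * P E :=
    calc P E ≤ P (E ∩ ⋃ j, Z j) + P (E \ ⋃ j, Z j) := measure_le_inter_add_sdiff P _ _
      _ = P (⋃ j, E ∩ Z j) := by rw [nonpos_iff_eq_zero.1 h, add_zero, inter_iUnion]
      _ ≤ ∑' j, P (E ∩ Z j) := measure_iUnion_le _
      _ = (∑' j, c j) * P E := by simp_rw [hZ]; exact ENNReal.tsum_mul_right
  refine this.not_gt ?_
  simpa using ENNReal.mul_lt_mul_left hE.ne' (measure_ne_top P E) hc

section Poisson

variable {V : Type*} [MeasurableSpace V]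

theorem measurableSet_setOf_forall_measure_eq {ι : Type*} [Countable ι] {A : ι → Set V}
    (hA : ∀ i, MeasurableSet (A i)) (c : ι → ℝ≥0∞) :
    MeasurableSet {ν : Measure V | ∀ i, ν (A i) = c i} := by
  simp only [ofPred_forall]
  exact MeasurableSet.iInter fun i => Measure.measurable_coe (hA i) (measurableSet_singleton _)

variable [Bornology V]

def HasPoissonCounts (P : Measure (Measure V)) (μ : Measure V) : Prop :=
  ∀ (n : ℕ) (A : Fin n → Set V),
    (∀ i, MeasurableSet (A i)) → (∀ i, Bornology.IsBounded (A i)) →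
    Pairwise (Function.onFun Disjoint A) →
    ∀ k : Fin n → ℕ,
      P {ν : Measure V | ∀ i, ν (A i) = k i}
        = ∏ i : Fin n,
            ENNReal.ofReal (Real.exp (-(μ (A i)).toReal))
              * (μ (A i)) ^ (k i) / (Nat.factorial (k i) : ℝ≥0∞)

variable {P : Measure (Measure V)} {μ : Measure V} {n : ℕ} {A : Fin n → Set V}

theorem HasPoissonCounts.measure_counts_zero_pos (hP : HasPoissonCounts P μ)
    (hAm : ∀ i, MeasurableSet (A i)) (hAb : ∀ i, Bornology.IsBounded (A i))
    (hAd : Pairwise (Disjoint on A)) : 0 < P {ν | ∀ i, ν (A i) = 0} := by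
  have := hP n A hAm hAb hAd 0
  simp only [Pi.zero_apply, Nat.cast_zero, pow_zero, mul_one, Nat.factorial_zero, Nat.cast_one,
    div_one] at this
  rw [this, pos_iff_ne_zero, Finset.prod_ne_zero_iff]
  exact fun i _ => (ENNReal.ofReal_pos.2 (Real.exp_pos _)).ne'

theorem HasPoissonCounts.measure_counts_inter_void (hP : HasPoissonCounts P μ)
    (hAm : ∀ i, MeasurableSet (A i)) (hAb : ∀ i, Bornology.IsBounded (A i))
    (hAd : Pairwise (Disjoint on A)) {B : Set V} (hBm : MeasurableSet B)
    (hBb : Bornology.IsBounded B) (hBA : ∀ i, Disjoint B (A i)) (k : Fin n → ℕ) :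
    P ({ν | ∀ i, ν (A i) = k i} ∩ {ν | ν B = 0})
      = ENNReal.ofReal (Real.exp (-(μ B).toReal)) * P {ν | ∀ i, ν (A i) = k i} := by
  have hcons := hP (n + 1) (Fin.cons B A) (Fin.cases hBm hAm) (Fin.cases hBb hAb)
    (Fin.pairwise_cons hBA hAd) (Fin.cons 0 k)
  have hevent : {ν : Measure V | ∀ i,
      ν ((Fin.cons B A : Fin (n + 1) → Set V) i) = (Fin.cons 0 k : Fin (n + 1) → ℕ) i}
      = {ν | ∀ i, ν (A i) = (k i : ℝ≥0∞)} ∩ {ν | ν B = 0} := by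
    ext ν
    simp [Fin.forall_fin_succ, and_comm]
  rw [← hevent, hcons, Fin.prod_univ_succ, hP n A hAm hAb hAd k]
  simp

theorem HasPoissonCounts.measure_counts_mem_inter_void (hP : HasPoissonCounts P μ)
    (hAm : ∀ i, MeasurableSet (A i)) (hAb : ∀ i, Bornology.IsBounded (A i))
    (hAd : Pairwise (Disjoint on A)) {B : Set V} (hBm : MeasurableSet B)
    (hBb : Bornology.IsBounded B) (hBA : ∀ i, Disjoint B (A i)) (K : Fin n → Set ℕ) :
    P ({ν | ∀ i, ∃ k ∈ K i, ν (A i) = k} ∩ {ν | ν B = 0})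
      = ENNReal.ofReal (Real.exp (-(μ B).toReal)) * P {ν | ∀ i, ∃ k ∈ K i, ν (A i) = k} := by
  set E : (Fin n → ℕ) → Set (Measure V) := fun k => {ν | ∀ i, ν (A i) = k i}
  have hE : {ν : Measure V | ∀ i, ∃ k ∈ K i, ν (A i) = k} = ⋃ k ∈ univ.pi K, E k := by
    ext ν
    simp only [mem_ofPred_eq, mem_iUnion, mem_univ_pi, E]
    exact ⟨fun h => ⟨fun i => (h i).choose, fun i => (h i).choose_spec.1,
      fun i => (h i).choose_spec.2⟩, fun ⟨k, hk, h⟩ i => ⟨k i, hk i, h i⟩⟩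
  have hEd : (univ.pi K).PairwiseDisjoint E := by
    refine Pairwise.set_pairwise (fun k k' hkk' => disjoint_left.2 fun ν hk hk' => hkk' ?_) _
    funext i
    exact_mod_cast (hk i).symm.trans (hk' i)
  have hEm : ∀ k, MeasurableSet (E k) := fun k => measurableSet_setOf_forall_measure_eq hAm _
  have hZm : MeasurableSet {ν : Measure V | ν B = 0} :=
    Measure.measurable_coe hBm (measurableSet_singleton 0)
  have hcount : (univ.pi K).Countable := Set.to_countable _
  rw [hE, iUnion₂_inter, measure_biUnion hcount (hEd.mono fun k => inter_subset_left)
    fun k _ => (hEm k).inter hZm, measure_biUnion hcount hEd fun k _ => hEm k,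
    ← ENNReal.tsum_mul_left]
  exact tsum_congr fun k =>
    hP.measure_counts_inter_void hAm hAb hAd hBm hBb hBA k

theorem HasPoissonCounts.measure_counts_mem_inter_nonvoid_pos [IsFiniteMeasure P]
    (hP : HasPoissonCounts P μ) (hAm : ∀ i, MeasurableSet (A i))
    (hAb : ∀ i, Bornology.IsBounded (A i)) (hAd : Pairwise (Disjoint on A)) {K : Fin n → Set ℕ}
    (hK : ∀ i, 0 ∈ K i) {ι : Type*} [Countable ι] {B : ι → Set V}
    (hBm : ∀ j, MeasurableSet (B j)) (hBb : ∀ j, Bornology.IsBounded (B j))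
    (hBA : ∀ j i, Disjoint (B j) (A i))
    (hsum : ∑' j, ENNReal.ofReal (Real.exp (-(μ (B j)).toReal)) < 1) :
    0 < P ({ν | ∀ i, ∃ k ∈ K i, ν (A i) = k} ∩ {ν | ∀ j, ν (B j) ≠ 0}) := by
  have hpos : 0 < P {ν | ∀ i, ∃ k ∈ K i, ν (A i) = k} :=
    (hP.measure_counts_zero_pos hAm hAb hAd).trans_le
      (measure_mono fun ν hν i => ⟨0, hK i, by simpa using hν i⟩)
  convert measure_sdiff_iUnion_pos hpos
    (fun j => hP.measure_counts_mem_inter_void hAm hAb hAd (hBm j) (hBb j) (hBA j) K) hsum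
    using 2
  ext ν
  simp

end Poisson

theorem exp_neg_mul_two_pow_le {a : ℝ} (ha : 1 ≤ a) (n : ℕ) :
    Real.exp (-(a * 2 ^ n)) ≤ Real.exp (-a) * 2⁻¹ ^ n := by
  have hn : (n : ℝ) ≤ 2 ^ n - 1 := by
    have := Nat.lt_two_pow_self (n := n)
    have : ((n + 1 : ℕ) : ℝ) ≤ ((2 ^ n : ℕ) : ℝ) := by exact_mod_cast this
    push_cast at this
    linarith
  have h2 : (2 : ℝ) ≤ Real.exp 1 := by linarith [Real.add_one_le_exp 1]
  calc Real.exp (-(a * 2 ^ n)) ≤ Real.exp (-a - n) := by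
        gcongr
        nlinarith [one_le_pow₀ (M₀ := ℝ) (n := n) one_le_two]
    _ = Real.exp (-a) * (Real.exp 1)⁻¹ ^ n := by
        rw [sub_eq_add_neg, Real.exp_add, ← Real.exp_neg, ← Real.exp_nat_mul]
        ring_nf
    _ ≤ Real.exp (-a) * 2⁻¹ ^ n := by gcongr

theorem eventually_natCast_mul_tsum_exp_neg_lt_one {c : ℝ} (hc : 0 < c) {d : ℕ} (hd : 1 ≤ d)
    (N : ℕ) : ∀ᶠ r in atTop,
      (N : ℝ≥0∞) * ∑' n : ℕ, ENNReal.ofReal (Real.exp (-(c * (2 ^ n * r) ^ d))) < 1 := by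
  have ha : Tendsto (fun r : ℝ => c * r ^ d) atTop atTop :=
    (tendsto_pow_atTop (by omega)).const_mul_atTop hc
  have hexp : Tendsto (fun r : ℝ => 2 * N * Real.exp (-(c * r ^ d))) atTop (𝓝 0) := by
    simpa using (Real.tendsto_exp_neg_atTop_nhds_zero.comp ha).const_mul (2 * (N : ℝ))
  filter_upwards [ha.eventually_ge_atTop 1, hexp.eventually (gt_mem_nhds one_pos)]
    with r ha1 hlt
  have hterm : ∀ n : ℕ, Real.exp (-(c * (2 ^ n * r) ^ d)) ≤ Real.exp (-(c * r ^ d)) * 2⁻¹ ^ n := by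
    intro n
    refine le_trans (Real.exp_le_exp.2 (neg_le_neg ?_)) (exp_neg_mul_two_pow_le ha1 n)
    calc c * r ^ d * 2 ^ n ≤ c * r ^ d * (2 ^ n) ^ d :=
          mul_le_mul_of_nonneg_left (le_self_pow₀ (one_le_pow₀ one_le_two) (by omega))
            (by linarith)
      _ = c * (2 ^ n * r) ^ d := by ring
  calc (N : ℝ≥0∞) * ∑' n : ℕ, ENNReal.ofReal (Real.exp (-(c * (2 ^ n * r) ^ d)))
      ≤ N * ∑' n : ℕ, ENNReal.ofReal (Real.exp (-(c * r ^ d))) * 2⁻¹ ^ n := by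
        gcongr with n
        refine (ENNReal.ofReal_le_ofReal (hterm n)).trans_eq ?_
        rw [ENNReal.ofReal_mul (Real.exp_nonneg _), ENNReal.ofReal_pow (by norm_num),
          ENNReal.ofReal_inv_of_pos two_pos, ENNReal.ofReal_ofNat]
    _ = ENNReal.ofReal (2 * N * Real.exp (-(c * r ^ d))) := by
        rw [ENNReal.tsum_mul_left, ENNReal.tsum_geometric, ENNReal.one_sub_inv_two, inv_inv,
          ENNReal.ofReal_mul (by positivity), ENNReal.ofReal_mul (by positivity)]
        simp only [ENNReal.ofReal_ofNat, ENNReal.ofReal_natCast]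
        ring
    _ < 1 := ENNReal.ofReal_lt_one.2 hlt

theorem exists_tsum_exp_neg_measure_farBall_lt_one {E : Type*} [NormedAddCommGroup E]
    [NormedSpace ℝ E] [MeasurableSpace E] [BorelSpace E] [FiniteDimensional ℝ E] [Nontrivial E]
    (μ : Measure E) [μ.IsAddHaarMeasure] (Y : Finset E) :
    ∃ L : ℝ, 1 ≤ L ∧
      ∑' p : ℕ × Y, ENNReal.ofReal (Real.exp (-(μ (farBall L (p.1, p.2))).toReal)) < 1 := by
  set V := (μ (ball 0 1)).toReal
  have hV : 0 < V := ENNReal.toReal_pos (measure_ball_pos μ 0 one_pos).ne' measure_ball_lt_top.ne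
  have hd : 1 ≤ Module.finrank ℝ E := Module.finrank_pos
  have hL := (tendsto_id.atTop_div_const four_pos : Tendsto (fun L : ℝ => L / 4) atTop atTop)
    |>.eventually (eventually_natCast_mul_tsum_exp_neg_lt_one hV hd Y.card)
  obtain ⟨L, hLsum, hL1⟩ := (hL.and (eventually_ge_atTop 1)).exists
  refine ⟨L, hL1, lt_of_eq_of_lt ?_ hLsum⟩
  have hball : ∀ p : ℕ × E,
      (μ (farBall L p)).toReal = V * (2 ^ p.1 * (L / 4)) ^ Module.finrank ℝ E := by
    intro p
    rw [farBall, Measure.addHaar_ball μ _ (by positivity), ENNReal.toReal_mul,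
      ENNReal.toReal_ofReal (by positivity)]
    ring
  simp_rw [hball]
  rw [ENNReal.tsum_prod (f := fun n (_ : Y) => ENNReal.ofReal (Real.exp
    (-(V * (2 ^ n * (L / 4)) ^ Module.finrank ℝ E))))]
  simp only [tsum_fintype, Finset.sum_const, Finset.card_univ, Fintype.card_coe, nsmul_eq_mul]
  exact ENNReal.tsum_mul_left

theorem exists_mem_msupp_norm_sub_lt_of_measure_farBall_ne_zero {E : Type*}
    [NormedAddCommGroup E] [NormedSpace ℝ E] [MeasurableSpace E] [SecondCountableTopology E]
    {ν : Measure E} {L : ℝ} (hL : 0 < L) {Y : Set E}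
    (hY : closedBall 0 3 \ ball 0 (3 / 2) ⊆ ⋃ y ∈ Y, ball y (1 / 4))
    (hν : ∀ n : ℕ, ∀ y ∈ Y, ν (farBall L (n, y)) ≠ 0) {t : E} (ht : L ≤ ‖t‖) :
    ∃ s ∈ msupp ν, s ≠ t ∧ ‖t - s‖ < ‖t‖ := by
  obtain ⟨n, y, hy, hsub⟩ := exists_farBall_subset_ball hL hY ht
  obtain ⟨s, hs, hsB⟩ := exists_mem_msupp_of_measure_ne_zero (hν n y hy)
  exact ⟨s, hs, ne_and_norm_sub_lt_of_mem_ball_smul (hsub hsB)⟩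

section Configuration

variable {E : Type*} [NormedAddCommGroup E] [NormedSpace ℝ E] [MeasurableSpace E]
  [OpensMeasurableSpace E] {L : ℝ} {m : ℕ} {c : Fin m → Set E} {Y : Finset E}

def goodConfigs (L : ℝ) (c : Fin m → Set E) (Y : Finset E) : Set (Measure E) :=
  {ν | ν (ball 0 1) = 0 ∧ (∀ i, ν (c i) ≠ 1) ∧ ∀ n : ℕ, ∀ y ∈ Y, ν (farBall L (n, y)) ≠ 0}

theorem IsSimplePointMeasure.exists_mem_msupp_norm_sub_lt_of_mem_goodConfigs
    [SecondCountableTopology E] {ν : Measure E} (hν : IsSimplePointMeasure ν) (hL : 0 < L)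
    (hcover : ball 0 L \ ball 0 1 ⊆ ⋃ i, c i) (hdiam : ∀ i, ∀ x ∈ c i, ∀ y ∈ c i, dist x y < 1)
    (hY : closedBall 0 3 \ ball 0 (3 / 2) ⊆ ⋃ y ∈ (Y : Set E), ball y (1 / 4))
    (hgood : ν ∈ goodConfigs L c Y) {t : E} (ht : t ∈ msupp ν) :
    ∃ s ∈ msupp ν, s ≠ t ∧ ‖t - s‖ < ‖t‖ := by
  obtain ⟨h0, hc, hfar⟩ := hgood
  rcases lt_or_ge ‖t‖ L with htL | htL
  · have ht1 : 1 ≤ ‖t‖ := by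
      by_contra! h
      exact (ht _ isOpen_ball (mem_ball_zero_iff.2 h)).ne' h0
    obtain ⟨i, hi⟩ := mem_iUnion.1 (hcover ⟨mem_ball_zero_iff.2 htL, by simpa using ht1⟩)
    obtain ⟨s, hs, hsi, hst⟩ := hν.exists_mem_msupp_ne ht hi (hc i)
    exact ⟨s, hs, hst, by rw [← dist_eq_norm]; linarith [hdiam i t hi s hsi]⟩
  · exact exists_mem_msupp_norm_sub_lt_of_measure_farBall_ne_zero hL hY hfar htL

theorem HasPoissonCounts.measure_goodConfigs_pos {P : Measure (Measure E)} [IsFiniteMeasure P]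
    {μ : Measure E} (hP : HasPoissonCounts P μ) (hL : 1 ≤ L) (hcm : ∀ i, MeasurableSet (c i))
    (hcS : ∀ i, c i ⊆ ball 0 L \ ball 0 1) (hcd : Pairwise (Disjoint on c))
    (hY : ∀ y ∈ Y, 3 / 2 ≤ ‖y‖)
    (hsum : ∑' p : ℕ × Y, ENNReal.ofReal (Real.exp (-(μ (farBall L (p.1, p.2))).toReal)) < 1) :
    0 < P (goodConfigs L c Y) := by
  set D : Fin (m + 1) → Set E := Fin.cons (ball 0 1) c
  have hDL : ∀ i, D i ⊆ ball 0 L :=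
    Fin.cases (ball_subset_ball hL) fun i => (hcS i).trans sdiff_subset
  have hBD : ∀ (p : ℕ × Y) i, Disjoint (farBall L (p.1, (p.2 : E))) (D i) :=
    fun p i => disjoint_left.2 fun w hw hwD => (mem_ball_zero_iff.1 (hDL i hwD)).not_gt
      (lt_norm_of_mem_farBall (by linarith) (hY _ p.2.2) hw)
  refine (hP.measure_counts_mem_inter_nonvoid_pos (Fin.cases measurableSet_ball hcm)
    (fun i => isBounded_ball.subset (hDL i))
    (Fin.pairwise_cons (fun i => disjoint_sdiff_right.mono_right (hcS i)) hcd)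
    (K := Fin.cons {0} fun _ => {1}ᶜ) (Fin.cases rfl fun _ => zero_ne_one)
    (fun _ => measurableSet_ball) (fun _ => isBounded_ball) hBD hsum).trans_le
    (measure_mono fun ν ⟨hνD, hνB⟩ => ⟨by simpa [D] using hνD 0, fun i => ?_,
      fun n y hy => hνB (n, ⟨y, hy⟩)⟩)
  obtain ⟨k, hk, hνk⟩ := hνD i.succ
  simp only [D, Fin.cons_succ, mem_compl_iff, mem_singleton_iff] at hk hνk
  rw [hνk]
  exact_mod_cast hk

end Configuration

/-- A stationary Poisson process on `ℝ^d` with intensity `γ · Leb` has,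
with positive probability, no point that is closer to the origin than to every other point
of the process. -/
theorem stmt17 (d : ℕ) (hd : 1 ≤ d) (γ : ℝ≥0) (hγ : 0 < γ)
    (P : Measure (Measure (EuclideanSpace ℝ (Fin d)))) [IsProbabilityMeasure P]
    -- `P` is concentrated on simple point measures
    (hsimple : ∀ᵐ ν ∂P, IsSimplePointMeasure ν)
    -- `P` is a Poisson process with intensity measure `γ · Leb`
    (hPoisson : ∀ (n : ℕ) (A : Fin n → Set (EuclideanSpace ℝ (Fin d))),
      (∀ i, MeasurableSet (A i)) → (∀ i, Bornology.IsBounded (A i)) →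
      Pairwise (Function.onFun Disjoint A) →
      ∀ k : Fin n → ℕ,
        P {ν : Measure (EuclideanSpace ℝ (Fin d)) | ∀ i, ν (A i) = k i}
          = ∏ i : Fin n,
              ENNReal.ofReal (Real.exp (-(((γ : ℝ≥0∞) • volume) (A i)).toReal))
                * (((γ : ℝ≥0∞) • volume) (A i)) ^ (k i) / (Nat.factorial (k i) : ℝ≥0∞)) :
    0 < P {ν : Measure (EuclideanSpace ℝ (Fin d)) |
        ¬ ∃ t ∈ msupp ν, ∀ s ∈ msupp ν, s ≠ t → ‖t‖ < ‖t - s‖} := by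
  -- makes `EuclideanSpace ℝ (Fin d)` nontrivial, so that balls have positive volume
  have : Nonempty (Fin d) := ⟨⟨0, hd⟩⟩
  have : ((γ : ℝ≥0∞) • volume : Measure (EuclideanSpace ℝ (Fin d))).IsAddHaarMeasure :=
    .smul _ (by simpa using hγ.ne') ENNReal.coe_ne_top
  obtain ⟨Y, hYnorm, hY⟩ := exists_finset_shell_subset_iUnion_ball (E := EuclideanSpace ℝ (Fin d))
  obtain ⟨L, hL, hsum⟩ := exists_tsum_exp_neg_measure_farBall_lt_one ((γ : ℝ≥0∞) • volume) Y
  obtain ⟨m, c, hcm, hcS, hcd, hcov, hcdiam⟩ :=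
    ((isCompact_closedBall (0 : EuclideanSpace ℝ (Fin d)) L).totallyBounded.subset
      (sdiff_subset.trans ball_subset_closedBall)).exists_measurable_partition
      (S := ball 0 L \ ball 0 1) (measurableSet_ball.diff measurableSet_ball) one_pos
  refine (HasPoissonCounts.measure_goodConfigs_pos hPoisson hL hcm hcS hcd hYnorm
    hsum).trans_le (measure_mono_ae ?_)
  filter_upwards [hsimple] with ν hν hgood ⟨t, ht, hnear⟩
  obtain ⟨s, hs, hst, hlt⟩ :=
    hν.exists_mem_msupp_norm_sub_lt_of_mem_goodConfigs (by linarith) hcov hcdiam hY hgood ht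
  exact (hnear s hs hst).not_gt hlt
end
end
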